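/- arXiv:1402.0554 — 3 statements merged into one kernel-verified Lean document; each statement's English description precedes it below -/
import Mathlib

section
/- Let λ = (λ₁,…,λₙ) be an n-tuple of real numbers with σ_j(λ) > 0 for j = 1,…,k (where 2 ≤ k ≤ n), σ_k(λ)^{1/k} ≥ A⁻¹ > 0, and σ₁(λ) ≤ A for some constant A > 0. Then there exists a constant K₀ > 0 depending only on A, n, k such that K₀⁻¹ ≤ σ_{j-1}(λ|i) ≤ K₀ for all i = 1,…,n and j = 2,…,k, where σ_{j-1}(λ|i) denotes the (j-1)-th elementary symmetric polynomial of λ with the i-th entry set to zero. -/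
/-!
On the Gårding cone `Γ_k = {σ_1, …, σ_k > 0}` every truncation `σ_j(λ|i)` with `j < k` is
positive. This goes by induction on `j` and on the index set: if `σ_j(λ|i) ≤ 0`, adding a
constant `s ≥ 0` to all entries keeps `λ` in `Γ_{j+1}` and, by the intermediate value theorem,
makes `σ_j(λ|i) = 0`. Then `σ_{j+1}(λ|i) = σ_{j+1}(λ) > 0`, while by induction the numbers
`σ_j(λ|i,x)` are `≥ 0` and sum to `(n - 1 - j) σ_j(λ|i) = 0`; so they vanish, and Euler's identity
`(j + 1) σ_{j+1} = Σ_x λ_x σ_j(·|x)` forces `σ_{j+1}(λ|i) = 0`.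

The hypotheses confine `λ` to a compact subset of `Γ_k`: `Σ λ_i² = σ_1² - 2σ_2 ≤ A²`, and Euler's
identity gives `σ_{j+1} ≤ A n σ_j`, hence `(A n)^(k-j) σ_j ≥ σ_k ≥ A^(-k)`. The continuous
functions `σ_{j-1}(λ|i)`, positive there, are then bounded above and away from zero.
-/

/-- The `k`-th elementary symmetric polynomial of `lam : Fin n → ℝ`. -/
def esymm (n k : ℕ) (lam : Fin n → ℝ) : ℝ :=
  ∑ s ∈ Finset.powersetCard k (Finset.univ : Finset (Fin n)), ∏ i ∈ s, lam i

open Finset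

variable {ι : Type*}

section Algebra

variable {R : Type*} [CommRing R]

def esymmOn (S : Finset ι) (j : ℕ) (f : ι → R) : R :=
  ∑ t ∈ S.powersetCard j, ∏ x ∈ t, f x

variable {S : Finset ι} {j : ℕ} {f : ι → R}

@[simp]
lemma esymmOn_zero (S : Finset ι) (f : ι → R) : esymmOn S 0 f = 1 := by
  simp [esymmOn]

lemma esymmOn_eq_zero_of_card_lt (h : #S < j) (f : ι → R) : esymmOn S j f = 0 := by
  simp [esymmOn, powersetCard_eq_empty.2 h]

lemma esymmOn_congr {g : ι → R} (h : ∀ x ∈ S, f x = g x) : esymmOn S j f = esymmOn S j g :=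
  sum_congr rfl fun _ ht => prod_congr rfl fun x hx => h x ((mem_powersetCard.1 ht).1 hx)

lemma esymmOn_one (S : Finset ι) (f : ι → R) : esymmOn S 1 f = ∑ x ∈ S, f x := by
  simp [esymmOn, powersetCard_one]

open Polynomial in
lemma esymmOn_eq_coeff_prod_X_add_C (hj : j ≤ #S) (f : ι → R) :
    esymmOn S j f = (∏ x ∈ S, (X + C (f x))).coeff (#S - j) := by
  rw [prod_X_add_C_coeff _ _ (Nat.sub_le _ _), Nat.sub_sub_self hj, esymmOn]

open Polynomial in
lemma esymmOn_add_const (hj : j ≤ #S) (f : ι → R) (s : R) :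
    esymmOn S j (fun x => f x + s) =
      ∑ m ∈ range (j + 1), ((#S - m).choose (j - m) : R) * s ^ (j - m) * esymmOn S m f := by
  have hvieta :
      ∏ x ∈ S, (X + C (f x)) = ∑ m ∈ range (#S + 1), C (esymmOn S m f) * X ^ (#S - m) := by
    have := Multiset.prod_X_add_C_eq_sum_esymm (S.val.map f)
    simp only [Multiset.map_map, Function.comp_def, Multiset.card_map, esymm_map_val] at this
    exact this
  have hshift : ∏ x ∈ S, (X + C (f x + s)) = (∏ x ∈ S, (X + C (f x))).comp (X + C s) := by
    simp only [Polynomial.prod_comp, add_comp, X_comp, C_comp, C_add]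
    exact prod_congr rfl fun _ _ => by ring
  rw [esymmOn_eq_coeff_prod_X_add_C hj, hshift, hvieta]
  simp only [Polynomial.sum_comp, mul_comp, C_comp, X_pow_comp, finsetSum_coeff, coeff_C_mul,
    coeff_X_add_C_pow]
  rw [← sum_subset (range_subset_range.2 (by omega : j + 1 ≤ #S + 1)) fun m hm hmj => ?_]
  · refine sum_congr rfl fun m hm => ?_
    rw [mem_range] at hm
    rw [show #S - m - (#S - j) = j - m by omega, show #S - j = (#S - m) - (j - m) by omega,
      Nat.choose_symm (by omega)]
    ring
  · rw [mem_range] at hm hmj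
    rw [Nat.choose_eq_zero_of_lt (by omega), Nat.cast_zero, mul_zero, mul_zero]

lemma continuous_esymmOn [TopologicalSpace R] [IsTopologicalRing R] (S : Finset ι) (j : ℕ) :
    Continuous fun f : ι → R => esymmOn S j f := by
  unfold esymmOn
  fun_prop

variable [DecidableEq ι]

lemma esymmOn_insert {a : ι} (ha : a ∉ S) (j : ℕ) (f : ι → R) :
    esymmOn (insert a S) (j + 1) f = f a * esymmOn S j f + esymmOn S (j + 1) f := by
  have hdisj : Disjoint (S.powersetCard (j + 1)) ((S.powersetCard j).image (insert a)) := by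
    rw [disjoint_right]
    rintro t ht hts
    obtain ⟨u, -, rfl⟩ := mem_image.1 ht
    exact ha ((mem_powersetCard.1 hts).1 (mem_insert_self a u))
  have hnot : ∀ t ∈ S.powersetCard j, a ∉ t := fun t ht hat => ha ((mem_powersetCard.1 ht).1 hat)
  rw [esymmOn, powersetCard_succ_insert ha, sum_union hdisj, add_comm, esymmOn, esymmOn, mul_sum,
    sum_image fun t ht u hu htu => by
      rw [← erase_insert (hnot t ht), ← erase_insert (hnot u hu), htu]]
  exact congrArg (· + _) (sum_congr rfl fun t ht => prod_insert (hnot t ht))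

lemma esymmOn_succ_eq_mul_erase_add {i : ι} (hi : i ∈ S) (j : ℕ) (f : ι → R) :
    esymmOn S (j + 1) f = f i * esymmOn (S.erase i) j f + esymmOn (S.erase i) (j + 1) f := by
  conv_lhs => rw [← insert_erase hi]
  exact esymmOn_insert (notMem_erase i S) j f

lemma esymmOn_update_zero (S : Finset ι) (j : ℕ) (f : ι → R) (i : ι) :
    esymmOn S j (Function.update f i 0) = esymmOn (S.erase i) j f := by
  have hoff : esymmOn (S.erase i) j (Function.update f i 0) = esymmOn (S.erase i) j f :=
    esymmOn_congr fun x hx => Function.update_of_ne (ne_of_mem_erase hx) _ _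
  by_cases hi : i ∈ S
  · cases j with
    | zero => simp
    | succ j =>
      rw [esymmOn_succ_eq_mul_erase_add hi, Function.update_self, zero_mul, zero_add, hoff]
  · rwa [erase_eq_of_notMem hi] at hoff ⊢

lemma sum_mul_esymmOn_erase (S : Finset ι) (j : ℕ) (f : ι → R) :
    ∑ i ∈ S, f i * esymmOn (S.erase i) j f = (j + 1) * esymmOn S (j + 1) f := by
  induction S using Finset.induction generalizing j with
  | empty => simp [esymmOn_eq_zero_of_card_lt (show #(∅ : Finset ι) < j + 1 by simp)]
  | insert a S ha ih =>
    have herase : ∀ i ∈ S, (insert a S).erase i = insert a (S.erase i) := fun i hi =>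
      erase_insert_of_ne fun h => ha (h ▸ hi)
    rw [sum_insert ha, erase_insert ha, sum_congr rfl fun i hi => by rw [herase i hi]]
    cases j with
    | zero =>
      simp only [esymmOn_zero, mul_one, esymmOn_insert ha, esymmOn_one, Nat.cast_zero, zero_add,
        one_mul]
    | succ m =>
      simp only [esymmOn_insert (notMem_mono (erase_subset _ S) ha), mul_add, sum_add_distrib,
        mul_left_comm _ (f a), ← mul_sum, ih, esymmOn_insert ha]
      push_cast
      ring

lemma sum_esymmOn_erase (S : Finset ι) (j : ℕ) (f : ι → R) :
    ∑ i ∈ S, esymmOn (S.erase i) j f = (#S - j) * esymmOn S j f := by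
  cases j with
  | zero => simp
  | succ j =>
    have h : ∀ i ∈ S, esymmOn (S.erase i) (j + 1) f
        = esymmOn S (j + 1) f - f i * esymmOn (S.erase i) j f := fun i hi => by
      rw [esymmOn_succ_eq_mul_erase_add hi]; ring
    rw [sum_congr rfl h, sum_sub_distrib, sum_const, sum_mul_esymmOn_erase, nsmul_eq_mul]
    push_cast
    ring

lemma sum_sq_eq_esymmOn (S : Finset ι) (f : ι → R) :
    ∑ x ∈ S, f x ^ 2 = esymmOn S 1 f ^ 2 - 2 * esymmOn S 2 f := by
  have herase : ∀ i ∈ S, esymmOn (S.erase i) 1 f = esymmOn S 1 f - f i := fun i hi => by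
    rw [esymmOn_succ_eq_mul_erase_add hi 0, esymmOn_zero, mul_one, add_sub_cancel_left]
  have h : ∑ i ∈ S, f i * esymmOn (S.erase i) 1 f = 2 * esymmOn S 2 f := by
    rw [sum_mul_esymmOn_erase]; norm_num
  rw [sum_congr rfl fun i hi => by rw [herase i hi]] at h
  simp only [mul_sub, sum_sub_distrib, ← sum_mul, ← sq, ← esymmOn_one S f] at h
  linear_combination -h

end Algebra

section Cone

variable {S : Finset ι} {j : ℕ} {f : ι → ℝ}

def gardingCone (S : Finset ι) (k : ℕ) : Set (ι → ℝ) :=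
  {f | ∀ j, 1 ≤ j → j ≤ k → 0 < esymmOn S j f}

lemma gardingCone_anti {k k' : ℕ} (h : k' ≤ k) : gardingCone S k ⊆ gardingCone S k' :=
  fun _ hf j hj hjk => hf j hj (hjk.trans h)

lemma le_card_of_esymmOn_ne_zero (h : esymmOn S j f ≠ 0) : j ≤ #S := by
  by_contra hlt
  exact h (esymmOn_eq_zero_of_card_lt (not_le.1 hlt) f)

lemma esymmOn_add_const_pos {s : ℝ} (hf : ∀ m ≤ j, 0 ≤ esymmOn S m f) (hs : 0 ≤ s)
    (hj : j ≤ #S) {m : ℕ} (hm : m ≤ j)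
    (hterm : 0 < ((#S - m).choose (j - m) : ℝ) * s ^ (j - m) * esymmOn S m f) :
    0 < esymmOn S j (fun x => f x + s) := by
  rw [esymmOn_add_const hj]
  exact sum_pos' (fun p hp => by have := hf p (by simpa [Nat.lt_succ_iff] using hp); positivity)
    ⟨m, mem_range.2 (by omega), hterm⟩

lemma add_const_mem_gardingCone {k : ℕ} {s : ℝ} (hf : f ∈ gardingCone S k) (hs : 0 ≤ s) :
    (fun x => f x + s) ∈ gardingCone S k := by
  intro j hj hjk
  have hnn : ∀ m ≤ j, 0 ≤ esymmOn S m f := fun m hm => by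
    rcases Nat.eq_zero_or_pos m with rfl | hm0
    · simp
    · exact (hf m hm0 (hm.trans hjk)).le
  exact esymmOn_add_const_pos hnn hs (le_card_of_esymmOn_ne_zero (hf j hj hjk).ne') le_rfl
    (by simpa using hf j hj hjk)

lemma add_const_mem_gardingCone_of_esymmOn_nonneg {g : ι → ℝ} {s : ℝ}
    (hpos : ∀ m, 1 ≤ m → m ≤ j + 1 → m ≠ j → 0 < esymmOn S m g) (hj : 0 ≤ esymmOn S j g)
    (hs : 0 < s) : (fun x => g x + s) ∈ gardingCone S (j + 1) := by
  have hnn : ∀ m ≤ j + 1, 0 ≤ esymmOn S m g := fun m hm => by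
    rcases Nat.eq_zero_or_pos m with rfl | hm0
    · simp
    · rcases eq_or_ne m j with rfl | hmj
      · exact hj
      · exact (hpos m hm0 hm hmj).le
  have hcard : j + 1 ≤ #S :=
    le_card_of_esymmOn_ne_zero (hpos (j + 1) le_add_self le_rfl (by omega)).ne'
  intro m hm1 hm
  rcases eq_or_ne m j with rfl | hmj
  · have hprev : 0 < esymmOn S (m - 1) g := by
      rcases Nat.eq_zero_or_pos (m - 1) with h0 | h0
      · simp [h0]
      · exact hpos (m - 1) h0 (by omega) (by omega)
    refine esymmOn_add_const_pos (fun i hi => hnn i (by omega)) hs.le (by omega)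
      (Nat.sub_le m 1) ?_
    rw [Nat.sub_sub_self hm1, Nat.choose_one_right, pow_one]
    have : (0 : ℝ) < (#S - (m - 1) : ℕ) := by exact_mod_cast Nat.sub_pos_of_lt (by omega)
    positivity
  · exact esymmOn_add_const_pos (fun i hi => hnn i (by omega)) hs.le (by omega) le_rfl
      (by simpa using hpos m hm1 hm hmj)

lemma esymmOn_add_const_ge {s : ℝ} (hf : ∀ m, 1 ≤ m → m < j → 0 ≤ esymmOn S m f) (hs : 0 ≤ s)
    (hj0 : 1 ≤ j) (hj : j ≤ #S) :
    ((#S).choose j : ℝ) * s ^ j + esymmOn S j f ≤ esymmOn S j (fun x => f x + s) := by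
  obtain ⟨j, rfl⟩ := Nat.exists_eq_add_of_le' hj0
  rw [esymmOn_add_const hj, sum_range_succ, sum_range_succ']
  have hmid : 0 ≤ ∑ m ∈ range j, ((#S - (m + 1)).choose (j + 1 - (m + 1)) : ℝ) *
      s ^ (j + 1 - (m + 1)) * esymmOn S (m + 1) f :=
    sum_nonneg fun m hm => by
      have := hf (m + 1) le_add_self (by simpa using hm)
      positivity
  simp only [Nat.sub_zero, esymmOn_zero, mul_one, Nat.sub_self, Nat.choose_zero_right, pow_zero,
    Nat.cast_one, one_mul]
  linarith

lemma exists_add_const_esymmOn_eq_zero (hf : ∀ m, 1 ≤ m → m < j → 0 < esymmOn S m f)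
    (hle : esymmOn S j f ≤ 0) : ∃ s, 0 ≤ s ∧ esymmOn S j (fun x => f x + s) = 0 := by
  rcases lt_or_ge #S j with hlt | hj
  · exact ⟨0, le_rfl, esymmOn_eq_zero_of_card_lt hlt _⟩
  have hj0 : 1 ≤ j := Nat.pos_of_ne_zero fun h => by norm_num [h] at hle
  set s₁ := 1 - esymmOn S j f
  have hs₁ : 1 ≤ s₁ := by linarith
  have hpos : 0 ≤ esymmOn S j (fun x => f x + s₁) := by
    have hge := esymmOn_add_const_ge (fun m hm1 hm => (hf m hm1 hm).le)
      (by linarith : (0 : ℝ) ≤ s₁) hj0 hj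
    have hchoose : (1 : ℝ) ≤ (#S).choose j := by exact_mod_cast Nat.choose_pos hj
    have hpow : s₁ ≤ s₁ ^ j := le_self_pow₀ hs₁ (by omega)
    nlinarith
  have hcont : ContinuousOn (fun s : ℝ => esymmOn S j (fun x => f x + s)) (Set.Icc 0 s₁) :=
    ((continuous_esymmOn S j).comp (by fun_prop)).continuousOn
  obtain ⟨s, hs, hzero⟩ :=
    intermediate_value_Icc (by linarith : (0 : ℝ) ≤ s₁) hcont ⟨by simpa using hle, hpos⟩
  exact ⟨s, hs.1, hzero⟩

lemma esymmOn_nonneg_of_add_const_pos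
    (h : ∀ s : ℝ, 0 < s → 0 < esymmOn S j (fun x => f x + s)) : 0 ≤ esymmOn S j f := by
  have hcont : Continuous fun s : ℝ => esymmOn S j (fun x => f x + s) :=
    (continuous_esymmOn S j).comp (by fun_prop)
  have hlim : Filter.Tendsto (fun s : ℝ => esymmOn S j (fun x => f x + s))
      (nhdsWithin 0 (Set.Ioi 0)) (nhds (esymmOn S j f)) := by
    simpa using (hcont.tendsto 0).mono_left nhdsWithin_le_nhds
  exact ge_of_tendsto hlim (eventually_nhdsWithin_of_forall fun s hs => (h s hs).le)

lemma esymmOn_succ_eq_zero_of_erase_nonneg [DecidableEq ι] (hzero : esymmOn S j f = 0)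
    (hnn : ∀ x ∈ S, 0 ≤ esymmOn (S.erase x) j f) : esymmOn S (j + 1) f = 0 := by
  have hsum : ∑ x ∈ S, esymmOn (S.erase x) j f = 0 := by
    rw [sum_esymmOn_erase, hzero, mul_zero]
  have heach := (sum_eq_zero_iff_of_nonneg hnn).1 hsum
  have heuler := sum_mul_esymmOn_erase S j f
  rw [sum_eq_zero fun x hx => by rw [heach x hx, mul_zero]] at heuler
  have : (j + 1 : ℝ) ≠ 0 := by positivity
  exact (mul_eq_zero.1 heuler.symm).resolve_left this

theorem esymmOn_erase_pos_of_mem_gardingCone_succ [DecidableEq ι] (j : ℕ) (S : Finset ι)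
    {f : ι → ℝ} (hf : f ∈ gardingCone S (j + 1)) {i : ι} (hi : i ∈ S) :
    0 < esymmOn (S.erase i) j f := by
  induction j using Nat.strong_induction_on generalizing S f i with
  | _ j ihj =>
  induction S using Finset.strongInduction generalizing f i with
  | H S ihS =>
  by_contra! hneg
  set T := S.erase i
  have hlow : ∀ g ∈ gardingCone S (j + 1), ∀ m, 1 ≤ m → m < j → 0 < esymmOn T m g :=
    fun g hg m _ hm => ihj m hm S (gardingCone_anti (by omega) hg) hi
  obtain ⟨s, hs, hzero⟩ := exists_add_const_esymmOn_eq_zero (hlow f hf) hneg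
  have hg : (fun x => f x + s) ∈ gardingCone S (j + 1) := add_const_mem_gardingCone hf hs
  have htop : 0 < esymmOn T (j + 1) (fun x => f x + s) := by
    have h := hg (j + 1) le_add_self le_rfl
    rwa [esymmOn_succ_eq_mul_erase_add hi, hzero, mul_zero, zero_add] at h
  have hnn : ∀ x ∈ T, 0 ≤ esymmOn (T.erase x) j (fun x => f x + s) := fun x hx =>
    esymmOn_nonneg_of_add_const_pos fun t ht => ihS T (erase_ssubset hi)
      (add_const_mem_gardingCone_of_esymmOn_nonneg (fun m hm1 hm hmj =>
        if hmj' : m = j + 1 then hmj' ▸ htop else hlow _ hg m hm1 (by omega)) hzero.ge ht) hx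
  exact htop.ne' (esymmOn_succ_eq_zero_of_erase_nonneg hzero hnn)

theorem esymmOn_erase_pos [DecidableEq ι] {S : Finset ι} {k : ℕ} {f : ι → ℝ}
    (hf : f ∈ gardingCone S k) {i : ι} (hi : i ∈ S) {j : ℕ} (hj : j < k) :
    0 < esymmOn (S.erase i) j f :=
  esymmOn_erase_pos_of_mem_gardingCone_succ j S (gardingCone_anti hj hf) hi

end Cone

lemma abs_le_of_esymmOn_one_le [DecidableEq ι] {S : Finset ι} {f : ι → ℝ} {A : ℝ}
    (h1 : 0 ≤ esymmOn S 1 f) (h1A : esymmOn S 1 f ≤ A) (h2 : 0 ≤ esymmOn S 2 f) {i : ι}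
    (hi : i ∈ S) : |f i| ≤ A := by
  refine abs_le_of_sq_le_sq ?_ (h1.trans h1A)
  calc f i ^ 2 ≤ ∑ x ∈ S, f x ^ 2 := single_le_sum (fun x _ => sq_nonneg (f x)) hi
    _ = esymmOn S 1 f ^ 2 - 2 * esymmOn S 2 f := sum_sq_eq_esymmOn S f
    _ ≤ A ^ 2 := by nlinarith

lemma succ_mul_esymmOn_succ_le [DecidableEq ι] {S : Finset ι} {k j : ℕ} {f : ι → ℝ} {A : ℝ}
    (hf : f ∈ gardingCone S k) (hA : ∀ i ∈ S, f i ≤ A) (hj : j < k) :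
    (j + 1) * esymmOn S (j + 1) f ≤ A * (#S - j) * esymmOn S j f := by
  rw [← sum_mul_esymmOn_erase, mul_assoc, ← sum_esymmOn_erase, mul_sum]
  exact sum_le_sum fun i hi =>
    mul_le_mul_of_nonneg_right (hA i hi) (esymmOn_erase_pos hf hi hj).le

lemma le_pow_mul_of_succ_le_mul {a : ℕ → ℝ} {c : ℝ} {k : ℕ} (hc : 0 ≤ c)
    (h : ∀ m < k, a (m + 1) ≤ c * a m) {j m : ℕ} (hjm : j ≤ m) (hm : m ≤ k) :
    a m ≤ c ^ (m - j) * a j := by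
  induction m, hjm using Nat.le_induction with
  | base => simp
  | succ m hjm ih =>
    calc a (m + 1) ≤ c * a m := h m (by omega)
      _ ≤ c * (c ^ (m - j) * a j) := mul_le_mul_of_nonneg_left (ih (by omega)) hc
      _ = c ^ (m + 1 - j) * a j := by rw [Nat.sub_add_comm hjm, pow_succ]; ring

def gardingRegion (ι : Type*) [Fintype ι] (k : ℕ) (A : ℝ) : Set (ι → ℝ) :=
  {f | (∀ i, |f i| ≤ A) ∧
    ∀ j, 1 ≤ j → j ≤ k → A⁻¹ ^ k ≤ (A * Fintype.card ι) ^ (k - j) * esymmOn univ j f}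

section GardingRegion

variable [Fintype ι] {k : ℕ} {A : ℝ}

lemma isCompact_gardingRegion : IsCompact (gardingRegion ι k A) := by
  refine (isCompact_univ_pi fun _ => isCompact_Icc (a := -A) (b := A)).of_isClosed_subset ?_
    fun f hf i _ => abs_le.1 (hf.1 i)
  simp only [gardingRegion, Set.ofPred_and, Set.ofPred_forall]
  exact (isClosed_iInter fun i => isClosed_le (continuous_apply i).abs continuous_const).inter
    (isClosed_iInter fun j => isClosed_iInter fun _ => isClosed_iInter fun _ =>
      isClosed_le continuous_const (continuous_const.mul (continuous_esymmOn univ j)))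

lemma gardingRegion_subset_gardingCone (hA : 0 < A) :
    gardingRegion ι k A ⊆ gardingCone univ k := fun f hf j hj hjk => by
  have hc : 0 ≤ (A * Fintype.card ι) ^ (k - j) := by positivity
  exact pos_of_mul_pos_right ((pow_pos (inv_pos.2 hA) k).trans_le (hf.2 j hj hjk)) hc

lemma mem_gardingRegion [DecidableEq ι] (hk : 2 ≤ k) (hA : 0 < A) {f : ι → ℝ}
    (hf : f ∈ gardingCone univ k) (htop : A⁻¹ ^ k ≤ esymmOn univ k f)
    (h1 : esymmOn univ 1 f ≤ A) : f ∈ gardingRegion ι k A := by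
  have habs : ∀ i, |f i| ≤ A := fun i =>
    abs_le_of_esymmOn_one_le (hf 1 le_rfl (by omega)).le h1 (hf 2 (by omega) hk).le (mem_univ i)
  have hnn : ∀ j ≤ k, 0 ≤ esymmOn univ j f := fun j hj => by
    rcases Nat.eq_zero_or_pos j with rfl | hj0
    · simp
    · exact (hf j hj0 hj).le
  have hstep : ∀ j < k, esymmOn univ (j + 1) f ≤ A * Fintype.card ι * esymmOn univ j f := by
    intro j hj
    have h := succ_mul_esymmOn_succ_le hf (fun i _ => (le_abs_self (f i)).trans (habs i)) hj
    rw [card_univ] at h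
    calc esymmOn univ (j + 1) f ≤ (j + 1) * esymmOn univ (j + 1) f :=
          le_mul_of_one_le_left (hnn (j + 1) hj) (by linarith [j.cast_nonneg (α := ℝ)])
      _ ≤ A * (Fintype.card ι - j) * esymmOn univ j f := h
      _ ≤ A * Fintype.card ι * esymmOn univ j f := by
          gcongr
          · exact hnn j hj.le
          · linarith [j.cast_nonneg (α := ℝ)]
  refine ⟨habs, fun j _ hjk => htop.trans ?_⟩
  exact le_pow_mul_of_succ_le_mul (a := (esymmOn univ · f)) (by positivity) hstep hjk le_rfl

end GardingRegion

lemma IsCompact.exists_two_sided_bound {X α : Type*} [TopologicalSpace X] [Fintype α]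
    {K : Set X} (hK : IsCompact K) {F : α → X → ℝ} (hF : ∀ a, ContinuousOn (F a) K)
    (hpos : ∀ a, ∀ x ∈ K, 0 < F a x) : ∃ C > 0, ∀ a, ∀ x ∈ K, C⁻¹ ≤ F a x ∧ F a x ≤ C := by
  have hone : ∀ a, ∃ C > 0, ∀ x ∈ K, C⁻¹ ≤ F a x ∧ F a x ≤ C := fun a => by
    obtain ⟨ε, hε, hlow⟩ := hK.exists_forall_le' (hF a) (hpos a)
    obtain ⟨M, hM⟩ := hK.exists_bound_of_continuousOn (hF a)
    refine ⟨max M ε⁻¹, lt_max_of_lt_right (inv_pos.2 hε), fun x hx => ⟨?_, ?_⟩⟩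
    · exact (inv_anti₀ (inv_pos.2 hε) (le_max_right _ _)).trans (by simpa using hlow x hx)
    · exact (le_abs_self _).trans ((hM x hx).trans (le_max_left _ _))
  choose C hC hbound using hone
  have hle : ∀ a, C a ≤ 1 + ∑ b, C b := fun a =>
    (single_le_sum (fun b _ => (hC b).le) (mem_univ a)).trans (le_add_of_nonneg_left zero_le_one)
  refine ⟨1 + ∑ b, C b, add_pos_of_pos_of_nonneg one_pos (sum_nonneg fun b _ => (hC b).le),
    fun a x hx => ⟨(inv_anti₀ (hC a) (hle a)).trans (hbound a x hx).1,
      (hbound a x hx).2.trans (hle a)⟩⟩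

theorem sigma_truncated_two_sided_bound_general (n k : ℕ) (hk2 : 2 ≤ k)
    (A : ℝ) (hA : 0 < A) :
    ∃ K₀ : ℝ, 0 < K₀ ∧ ∀ lam : Fin n → ℝ,
      (∀ j : ℕ, 1 ≤ j → j ≤ k → 0 < esymm n j lam) →
      A⁻¹ ≤ esymm n k lam ^ ((1 : ℝ) / k) →
      esymm n 1 lam ≤ A →
      ∀ i : Fin n, ∀ j : ℕ, 2 ≤ j → j ≤ k →
        K₀⁻¹ ≤ esymm n (j - 1) (Function.update lam i 0) ∧
        esymm n (j - 1) (Function.update lam i 0) ≤ K₀ := by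
  obtain ⟨K₀, hK₀, hbound⟩ := isCompact_gardingRegion.exists_two_sided_bound
    (F := fun (p : Fin n × Fin k) lam => esymmOn (univ.erase p.1) p.2 lam)
    (fun _ => (continuous_esymmOn _ _).continuousOn)
    fun p lam hlam =>
      esymmOn_erase_pos (gardingRegion_subset_gardingCone hA hlam) (mem_univ _) p.2.isLt
  refine ⟨K₀, hK₀, fun lam hpos hroot h1 i j hj2 hjk => ?_⟩
  have htop : A⁻¹ ^ k ≤ esymm n k lam := by
    rwa [one_div, Real.le_rpow_inv_iff_of_pos (by positivity) (hpos k (by omega) le_rfl).le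
      (by positivity), Real.rpow_natCast] at hroot
  have hmem := mem_gardingRegion hk2 hA hpos htop h1
  rw [esymm, ← esymmOn, esymmOn_update_zero]
  exact hbound (i, ⟨j - 1, by omega⟩) lam hmem

theorem sigma_truncated_two_sided_bound (n k : ℕ) (hk2 : 2 ≤ k) (hkn : k ≤ n)
    (A : ℝ) (hA : 0 < A) :
    ∃ K₀ : ℝ, 0 < K₀ ∧ ∀ lam : Fin n → ℝ,
      (∀ j : ℕ, 1 ≤ j → j ≤ k → 0 < esymm n j lam) →
      A⁻¹ ≤ esymm n k lam ^ ((1 : ℝ) / k) →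
      esymm n 1 lam ≤ A →
      ∀ i : Fin n, ∀ j : ℕ, 2 ≤ j → j ≤ k →
        K₀⁻¹ ≤ esymm n (j - 1) (Function.update lam i 0) ∧
        esymm n (j - 1) (Function.update lam i 0) ≤ K₀ :=
  sigma_truncated_two_sided_bound_general n k hk2 A hA
end

section
/- Let λ = (λ₁,…,λₙ) satisfy σ_j(λ) > 0 for j = 1,…,k (with 2 ≤ k ≤ n), σ_k(λ)^{1/k} ≥ A⁻¹ > 0, and σ₁(λ) ≤ A. Then there is K₀ > 0 depending only on A, n, k such that −K₀ ≤ λⱼ ≤ K₀ for all j = 1,…,n. -/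
/-!
By Newton's identity `σ₁² = ∑ λᵢ² + 2 σ₂`, positivity of `σ₂` gives `λⱼ² ≤ σ₁²`, so
`|λⱼ| ≤ σ₁ ≤ A` and one may take `K₀ = A`.
-/

open Finset

theorem MvPolynomial.esymm_one_sq (σ R : Type*) [Fintype σ] [CommRing R] :
    esymm σ R 1 ^ 2 = psum σ R 2 + 2 * esymm σ R 2 := by
  have newton := mul_esymm_eq_sum σ R 2
  have : {a ∈ antidiagonal 2 | a.1 < 2} = {(0, 2), (1, 1)} := by decide
  rw [this, sum_pair (by decide)] at newton
  simp only [esymm_one, psum, esymm_zero, pow_one] at newton ⊢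
  linear_combination -newton

theorem esymm_eq_aeval (n k : ℕ) (lam : Fin n → ℝ) :
    esymm n k lam = MvPolynomial.aeval lam (MvPolynomial.esymm (Fin n) ℝ k) := by
  simp [esymm, MvPolynomial.esymm]

theorem sq_le_esymm_one_sq {n : ℕ} {lam : Fin n → ℝ} (h₂ : 0 ≤ esymm n 2 lam) (j : Fin n) :
    lam j ^ 2 ≤ esymm n 1 lam ^ 2 := by
  have newton := congrArg (MvPolynomial.aeval lam) (MvPolynomial.esymm_one_sq (Fin n) ℝ)
  simp only [map_pow, map_add, map_mul, map_ofNat, ← esymm_eq_aeval, MvPolynomial.psum, map_sum,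
    MvPolynomial.aeval_X] at newton
  have := single_le_sum (fun i _ ↦ sq_nonneg (lam i)) (mem_univ j)
  linarith

theorem abs_le_esymm_one {n : ℕ} {lam : Fin n → ℝ} (h₁ : 0 ≤ esymm n 1 lam)
    (h₂ : 0 ≤ esymm n 2 lam) (j : Fin n) : |lam j| ≤ esymm n 1 lam :=
  abs_le_of_sq_le_sq (sq_le_esymm_one_sq h₂ j) h₁

theorem eigenvalue_two_sided_bound_general (n k : ℕ) (hk2 : 2 ≤ k)
    (A : ℝ) (hA : 0 < A) :
    ∃ K₀ : ℝ, 0 < K₀ ∧ ∀ lam : Fin n → ℝ,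
      (∀ j : ℕ, 1 ≤ j → j ≤ k → 0 < esymm n j lam) →
      A⁻¹ ≤ esymm n k lam ^ ((1 : ℝ) / k) →
      esymm n 1 lam ≤ A →
      ∀ j : Fin n, -K₀ ≤ lam j ∧ lam j ≤ K₀ := by
  refine ⟨A, hA, fun lam hpos _ hσ₁ j ↦ abs_le.mp ?_⟩
  have h₁ := hpos 1 le_rfl (by omega)
  have h₂ := hpos 2 (by omega) hk2
  exact (abs_le_esymm_one h₁.le h₂.le j).trans hσ₁

theorem eigenvalue_two_sided_bound (n k : ℕ) (hk2 : 2 ≤ k) (hkn : k ≤ n)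
    (A : ℝ) (hA : 0 < A) :
    ∃ K₀ : ℝ, 0 < K₀ ∧ ∀ lam : Fin n → ℝ,
      (∀ j : ℕ, 1 ≤ j → j ≤ k → 0 < esymm n j lam) →
      A⁻¹ ≤ esymm n k lam ^ ((1 : ℝ) / k) →
      esymm n 1 lam ≤ A →
      ∀ j : Fin n, -K₀ ≤ lam j ∧ lam j ≤ K₀ :=
  eigenvalue_two_sided_bound_general n k hk2 A hA
end

section
/- Maclaurin-type comparison: for an n-tuple λ of reals with σ_i(λ) > 0 for i = 1,…,k, and for 1 ≤ j ≤ k, one has σ_j(λ)^{1/j}/binom(n,j)^{1/j} ≥ σ_k(λ)^{1/k}/binom(n,k)^{1/k}. -/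
/-!
With `E_m = σ_m / (n choose m)`, Newton's inequalities `E_d E_{d+2} ≤ E_{d+1}²` hold for every
real `λ`: the polynomial `∏ (X + λ_i)` has only real roots, and this survives differentiation
(Rolle) and reversal of coefficients. Differentiating, reversing, and differentiating again
down to degree two leaves a real-rooted quadratic with coefficients proportional to
`E_d, 2 E_{d+1}, E_{d+2}`, whose discriminant is nonnegative. In the `Γ_k` cone `E_0 = 1` and
`E_1, …, E_k` are positive, so the ratios `E_{m+1} / E_m` decrease for `m < k`, which makes
`E_m ^ (1 / m)` decrease on `1 ≤ m ≤ k`.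
-/

open Polynomial
open scoped Nat

namespace Polynomial

theorem Splits.reverse {K : Type*} [DivisionSemiring K] {p : K[X]} (hp : p.Splits) :
    p.reverse.Splits := by
  induction hp using Submonoid.closure_induction with
  | mem q hq =>
    refine .of_natDegree_le_one (q.reverse_natDegree_le.trans ?_)
    rcases hq with ⟨a, rfl⟩ | ⟨a, rfl⟩ <;> simp
  | one => rw [← C_1, reverse_C]; exact Splits.C 1
  | mul f g _ _ hf hg => rw [reverse_mul_of_domain]; exact hf.mul hg

theorem Splits.derivative {p : ℝ[X]} (hp : p.Splits) : (Polynomial.derivative p).Splits := by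
  rw [splits_iff_card_roots] at hp ⊢
  have := p.card_roots_le_derivative
  have := (Polynomial.derivative p).card_roots'
  have := p.natDegree_derivative_le
  omega

theorem Splits.iterate_derivative {p : ℝ[X]} (hp : p.Splits) (k : ℕ) :
    (Polynomial.derivative^[k] p).Splits := by
  induction k with
  | zero => exact hp
  | succ k ih => rw [Function.iterate_succ_apply']; exact ih.derivative

theorem Splits.discrim_nonneg {K : Type*} [Field K] [LinearOrder K] [IsStrictOrderedRing K]
    {q : K[X]} (hq : q.Splits) (hdeg : q.natDegree ≤ 2) :
    0 ≤ discrim (q.coeff 2) (q.coeff 1) (q.coeff 0) := by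
  rcases eq_or_ne (q.coeff 2) 0 with h2 | h2
  · rw [discrim, h2]; nlinarith [sq_nonneg (q.coeff 1)]
  have hdeg0 : q.degree ≠ 0 := fun h ↦ h2 (coeff_eq_zero_of_degree_lt (by rw [h]; decide))
  obtain ⟨x, hx⟩ := hq.exists_eval_eq_zero hdeg0
  rw [eval_eq_sum_range' (n := 3) (by omega)] at hx
  simp only [Finset.sum_range_succ, Finset.sum_range_zero] at hx
  rw [discrim_eq_sq_of_quadratic_eq_zero (x := x) (by linear_combination hx)]
  positivity

theorem Splits.coeff_div_choose_mul_le_sq {p : ℝ[X]} (hp : p.Splits) {i : ℕ}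
    (hi : i + 2 ≤ p.natDegree) :
    p.coeff i / p.natDegree.choose i * (p.coeff (i + 2) / p.natDegree.choose (i + 2)) ≤
      (p.coeff (i + 1) / p.natDegree.choose (i + 1)) ^ 2 := by
  set N := p.natDegree
  obtain ⟨s, hs⟩ : ∃ s, N = i + 2 + s := ⟨N - (i + 2), by omega⟩
  set r := Polynomial.derivative^[i] p
  set q := Polynomial.derivative^[s] r.reverse
  have hr : r.natDegree = s + 2 := by
    have hp0 : p ≠ 0 := by rintro rfl; simp [N] at hi
    refine natDegree_eq_of_le_of_coeff_ne_zero ?_ ?_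
    · exact (natDegree_iterate_derivative p i).trans (by omega)
    · rw [coeff_iterate_derivative, nsmul_eq_mul, show s + 2 + i = N by omega]
      exact mul_ne_zero (Nat.cast_ne_zero.mpr (Nat.descFactorial_eq_zero_iff_lt.not.mpr (by omega)))
        (leadingCoeff_ne_zero.mpr hp0)
  have hq : q.natDegree ≤ 2 :=
    (natDegree_iterate_derivative _ s).trans (by have := r.reverse_natDegree_le; omega)
  have hcoeff : ∀ a b, a + b = 2 →
      p.coeff (i + b) / N.choose (i + b) = a ! * b ! * q.coeff a / N ! := by
    intro a b hab
    have hfact : (a + s).descFactorial s * (b + i).descFactorial i * (a ! * b ! * N.choose (i + b))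
        = N ! := by
      have hdesc : ∀ m k, m ! * (m + k).descFactorial k = (m + k)! := fun m k ↦ by
        simpa using Nat.factorial_mul_descFactorial (Nat.le_add_left k m)
      calc _ = N.choose (i + b) * (a ! * (a + s).descFactorial s) *
            (b ! * (b + i).descFactorial i) := by ring
        _ = N ! := by
          rw [hdesc, hdesc, hs, show i + 2 + s = a + s + (i + b) by omega, add_comm b i,
            Nat.add_choose_mul_factorial_mul_factorial]
    have hchoose : (0 : ℝ) < N.choose (i + b) := by exact_mod_cast Nat.choose_pos (by omega)
    rw [div_eq_div_iff hchoose.ne' (by positivity), coeff_iterate_derivative, nsmul_eq_mul,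
      coeff_reverse, hr, revAt_le (by omega), show s + 2 - (a + s) = b by omega,
      coeff_iterate_derivative, nsmul_eq_mul, ← hfact, add_comm b i]
    push_cast
    ring
  have hdisc := ((hp.iterate_derivative i).reverse.iterate_derivative s).discrim_nonneg hq
  have h0 := hcoeff 2 0 rfl
  rw [add_zero] at h0
  rw [h0, hcoeff 1 1 rfl, hcoeff 0 2 rfl, div_mul_div_comm, div_pow, ← sq,
    div_le_div_iff_of_pos_right (by positivity)]
  rw [discrim] at hdisc
  norm_num
  linarith

end Polynomial

theorem esymm_eq_coeff_prod_X_add_C {n m : ℕ} (lam : Fin n → ℝ) (hm : m ≤ n) :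
    esymm n m lam = (∏ i, (X + C (lam i))).coeff (n - m) := by
  rw [Finset.prod_X_add_C_coeff _ _ (by simp), Finset.card_univ, Fintype.card_fin,
    Nat.sub_sub_self hm, esymm]

theorem esymm_div_choose_mul_le_sq {n d : ℕ} (lam : Fin n → ℝ) (hd : d + 2 ≤ n) :
    esymm n d lam / n.choose d * (esymm n (d + 2) lam / n.choose (d + 2)) ≤
      (esymm n (d + 1) lam / n.choose (d + 1)) ^ 2 := by
  set F : ℝ[X] := ∏ i, (X + C (lam i))
  have hF : F.natDegree = n := by
    rw [natDegree_prod_of_monic _ _ fun i _ ↦ monic_X_add_C (lam i)]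
    simp
  have hE : ∀ m ≤ n, esymm n m lam / n.choose m = F.coeff (n - m) / n.choose (n - m) :=
    fun m hm ↦ by rw [esymm_eq_coeff_prod_X_add_C lam hm, Nat.choose_symm hm]
  have hnewton := (Splits.prod fun i _ ↦ Splits.X_add_C (lam i)).coeff_div_choose_mul_le_sq
    (p := F) (i := n - (d + 2)) (by omega)
  rw [hF] at hnewton
  rw [hE d (by omega), hE (d + 1) (by omega), hE (d + 2) (by omega), mul_comm,
    show n - d = n - (d + 2) + 2 by omega, show n - (d + 1) = n - (d + 2) + 1 by omega]
  exact hnewton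

theorem pow_succ_le_pow_of_mul_le_sq {E : ℕ → ℝ} {k : ℕ} (h0 : E 0 = 1)
    (hpos : ∀ m ≤ k, 0 < E m) (hE : ∀ m, m + 2 ≤ k → E m * E (m + 2) ≤ E (m + 1) ^ 2) :
    ∀ m, m + 1 ≤ k → E (m + 1) ^ m ≤ E m ^ (m + 1) := by
  intro m hm
  induction m with
  | zero => simp [h0]
  | succ m ih =>
    refine le_of_mul_le_mul_right ?_ (pow_pos (hpos (m + 1) (by omega)) m)
    calc E (m + 2) ^ (m + 1) * E (m + 1) ^ m
        ≤ E (m + 2) ^ (m + 1) * E m ^ (m + 1) := by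
          gcongr
          · exact (pow_pos (hpos (m + 2) hm) _).le
          · exact ih (by omega)
      _ = (E m * E (m + 2)) ^ (m + 1) := by ring
      _ ≤ (E (m + 1) ^ 2) ^ (m + 1) := by
          gcongr
          · exact (mul_pos (hpos m (by omega)) (hpos (m + 2) hm)).le
          · exact hE m hm
      _ = E (m + 1) ^ (m + 2) * E (m + 1) ^ m := by ring

theorem Real.rpow_one_div_le_rpow_one_div_of_pow_le_pow {x y : ℝ} {a b : ℕ} (hx : 0 ≤ x)
    (hy : 0 ≤ y) (ha : 0 < a) (hb : 0 < b) (h : x ^ a ≤ y ^ b) :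
    x ^ (1 / b : ℝ) ≤ y ^ (1 / a : ℝ) := by
  have hab : (0 : ℝ) ≤ 1 / (a * b) := by positivity
  calc x ^ (1 / b : ℝ) = (x ^ a) ^ (1 / (a * b) : ℝ) := by
        rw [← Real.rpow_natCast, ← Real.rpow_mul hx]; field_simp
    _ ≤ (y ^ b) ^ (1 / (a * b) : ℝ) := Real.rpow_le_rpow (by positivity) h hab
    _ = y ^ (1 / a : ℝ) := by
        rw [← Real.rpow_natCast, ← Real.rpow_mul hy]; field_simp

theorem antitoneOn_rpow_one_div_of_mul_le_sq {E : ℕ → ℝ} {k : ℕ} (h0 : E 0 = 1)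
    (hpos : ∀ m ≤ k, 0 < E m) (hE : ∀ m, m + 2 ≤ k → E m * E (m + 2) ≤ E (m + 1) ^ 2) :
    AntitoneOn (fun m : ℕ ↦ E m ^ (1 / m : ℝ)) (Set.Icc 1 k) := by
  refine antitoneOn_of_succ_le Set.ordConnected_Icc fun m _ hm hm1 ↦ ?_
  simp only [Order.succ_eq_add_one, Set.mem_Icc] at hm hm1 ⊢
  exact_mod_cast Real.rpow_one_div_le_rpow_one_div_of_pow_le_pow (hpos _ hm1.2).le (hpos _ hm.2).le
    hm.1 (Nat.succ_pos m) (pow_succ_le_pow_of_mul_le_sq h0 hpos hE m hm1.2)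

theorem maclaurin_gamma_k (n k j : ℕ) (hkn : k ≤ n) (hj : 1 ≤ j) (hjk : j ≤ k)
    (lam : Fin n → ℝ)
    (hpos : ∀ i : ℕ, 1 ≤ i → i ≤ k → 0 < esymm n i lam) :
    esymm n k lam ^ ((1 : ℝ) / k) / ((n.choose k : ℝ)) ^ ((1 : ℝ) / k) ≤
      esymm n j lam ^ ((1 : ℝ) / j) / ((n.choose j : ℝ)) ^ ((1 : ℝ) / j) := by
  set E : ℕ → ℝ := fun m ↦ esymm n m lam / n.choose m
  have hE0 : E 0 = 1 := by simp [E, esymm]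
  have hEpos : ∀ m ≤ k, 0 < E m := by
    intro m hm
    rcases Nat.eq_zero_or_pos m with rfl | hm0
    · simp [hE0]
    · exact div_pos (hpos m hm0 hm) (by exact_mod_cast Nat.choose_pos (hm.trans hkn))
  have hanti := antitoneOn_rpow_one_div_of_mul_le_sq hE0 hEpos
    fun m hm ↦ esymm_div_choose_mul_le_sq lam (hm.trans hkn)
  have hk : 1 ≤ k := hj.trans hjk
  rw [← Real.div_rpow (hpos k hk le_rfl).le (Nat.cast_nonneg _),
    ← Real.div_rpow (hpos j hj hjk).le (Nat.cast_nonneg _)]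
  exact hanti ⟨hj, hjk⟩ ⟨hk, le_rfl⟩ hjk
end
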